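/- Let N be a rooted phylogenetic network on a finite set X. Then the normalisation Ñ of N is a normal network on X: every vertex of Ñ is visible in Ñ, and Ñ has no shortcuts. -/

import Mathlib

/-!
Formalisation framework for rooted phylogenetic networks.

A network is represented as a directed graph on an ambient vertex type `V`:
a vertex set `verts`, a root vertex `root`, and an arc relation `arc`.
-/

structure Net (V : Type*) where
  verts : Set V
  root : V
  arc : V → V → Prop

namespace Net

variable {V : Type*} {W : Type*}

/-- `N.reach u v` means there is a (possibly empty) directed path from `u` to `v`. -/
def reach (N : Net V) : V → V → Prop := Relation.ReflTransGen N.arc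

/-- The in-degree of a vertex. -/
noncomputable def inDeg (N : Net V) (v : V) : ℕ := {u | N.arc u v}.ncard

/-- The out-degree of a vertex. -/
noncomputable def outDeg (N : Net V) (v : V) : ℕ := {w | N.arc v w}.ncard

/-- The leaves of `N`: the vertices of out-degree 0. -/
def leaves (N : Net V) : Set V := {v ∈ N.verts | N.outDeg v = 0}

/-- `N.IsPathFrom u v l` : the list `l` is a directed path in `N` from `u` to `v`
(consecutive entries joined by arcs; a one-element list is the empty path). -/
def IsPathFrom (N : Net V) (u v : V) (l : List V) : Prop :=
  l.Chain' N.arc ∧ l.head? = some u ∧ l.getLast? = some v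

/-- A vertex is visible if some leaf is such that every directed path from the
root to that leaf passes through the vertex. -/
def Visible (N : Net V) (x : V) : Prop :=
  x ∈ N.verts ∧ ∃ y ∈ N.leaves, ∀ l : List V, N.IsPathFrom N.root y l → x ∈ l

/-- A subdividing vertex is one of in-degree 1 and out-degree 1. -/
def Subdividing (N : Net V) (v : V) : Prop := N.inDeg v = 1 ∧ N.outDeg v = 1

/-- The digraph `Cov(N)` on the visible vertices of `N`: an arc `(u,v)` whenever
`u ≠ v`, `u →_N v`, and no visible vertex lies strictly between `u` and `v`. -/
def cov (N : Net V) : Net V where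
  verts := {v | N.Visible v}
  root := N.root
  arc u v := N.Visible u ∧ N.Visible v ∧ u ≠ v ∧ N.reach u v ∧
    ¬ ∃ w, N.Visible w ∧ w ≠ u ∧ w ≠ v ∧ N.reach u w ∧ N.reach w v

/-- The normalisation `Ñ` of `N`: obtained from `Cov(N)` by suppressing every
subdividing vertex.  Its vertices are the visible vertices of `N` that are not
subdividing in `Cov(N)`, with an arc `(u,v)` whenever `Cov(N)` has a directed path
from `u` to `v` (of length at least one) all of whose interior vertices are
subdividing in `Cov(N)`. -/
def normalise (N : Net V) : Net V where
  verts := {v | N.Visible v ∧ ¬ N.cov.Subdividing v}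
  root := N.root
  arc u v := (N.Visible u ∧ ¬ N.cov.Subdividing u) ∧ (N.Visible v ∧ ¬ N.cov.Subdividing v) ∧
    ∃ l : List V, N.cov.IsPathFrom u v l ∧ 2 ≤ l.length ∧
      ∀ w ∈ l.tail.dropLast, N.cov.Subdividing w

/-- `N` is a rooted phylogenetic network on the finite nonempty leaf set `X`. -/
structure IsPhylo (N : Net V) (X : Set V) : Prop where
  finite : N.verts.Finite
  nonempty : X.Nonempty
  arc_mem : ∀ ⦃u v : V⦄, N.arc u v → u ∈ N.verts ∧ v ∈ N.verts
  acyclic : ∀ ⦃u v : V⦄, N.arc u v → ¬ N.reach v u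
  root_mem : N.root ∈ N.verts
  root_inDeg : N.inDeg N.root = 0
  root_unique : ∀ v ∈ N.verts, N.inDeg v = 0 → v = N.root
  leaves_eq : N.leaves = X
  leaf_inDeg : ∀ x ∈ X, N.inDeg x = 1
  interior_deg : ∀ v ∈ N.verts, v ≠ N.root → v ∉ X →
    (N.inDeg v = 1 ∧ 2 ≤ N.outDeg v) ∨ (N.outDeg v = 1 ∧ 2 ≤ N.inDeg v)

/-- `N` has no shortcuts: no arc `(u,v)` such that there is also a directed path
from `u` to `v` of length at least 2 (i.e. a path-list with at least 3 entries). -/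
def NoShortcuts (N : Net V) : Prop :=
  ∀ u v : V, N.arc u v → ¬ ∃ l : List V, N.IsPathFrom u v l ∧ 3 ≤ l.length

/-- Tree-child: every vertex is visible. -/
def TreeChild (N : Net V) : Prop := ∀ v ∈ N.verts, N.Visible v

/-- Normal: tree-child with no shortcuts. -/
def Normal (N : Net V) : Prop := N.TreeChild ∧ N.NoShortcuts

/-- A tree: every vertex has in-degree at most 1. -/
def IsTree (N : Net V) : Prop := ∀ v ∈ N.verts, N.inDeg v ≤ 1

/-- The cluster of `v`: the set of leaves reachable from `v`. -/
def cluster (N : Net V) (v : V) : Set V := {x ∈ N.leaves | N.reach v x}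

/-- The identifying set of `v`: the set of leaves `x` such that every directed
path from the root to `x` passes through `v`. -/
def ident (N : Net V) (v : V) : Set V :=
  {x ∈ N.leaves | ∀ l : List V, N.IsPathFrom N.root x l → v ∈ l}

/-- A digraph isomorphism between two networks, given by the map `f`. -/
def NetEquiv (M : Net V) (M' : Net W) (f : V → W) : Prop :=
  Set.BijOn f M.verts M'.verts ∧
    ∀ u ∈ M.verts, ∀ v ∈ M.verts, (M.arc u v ↔ M'.arc (f u) (f v))

/-- Two networks over the same ambient type are equivalent relative to a leaf set
`X` if there is a digraph isomorphism between them fixing each element of `X`. -/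
def EquivOn (M M' : Net V) (X : Set V) : Prop :=
  ∃ f : V → V, NetEquiv M M' f ∧ ∀ x ∈ X, f x = x

/-- `N₁ ⊕ N₂` : disjoint copies of `N₁` and `N₂` under a new root (`none`). -/
def oplus {V₁ V₂ : Type*} (N₁ : Net V₁) (N₂ : Net V₂) : Net (Option (V₁ ⊕ V₂)) where
  verts := insert none
    ((fun v => some (Sum.inl v)) '' N₁.verts ∪ (fun v => some (Sum.inr v)) '' N₂.verts)
  root := none
  arc a b :=
    match a, b with
    | none, some (Sum.inl w) => w = N₁.root
    | none, some (Sum.inr w) => w = N₂.root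
    | some (Sum.inl u), some (Sum.inl w) => N₁.arc u w
    | some (Sum.inr u), some (Sum.inr w) => N₂.arc u w
    | _, _ => False

/-- `N₁ ⊗ N₂` : identify each leaf `x` of `N₁` with the root of its own copy of `N₂`;
the copy of a non-leaf vertex `u` of `N₁` is `Sum.inl u`, and the vertex `w` of the
copy of `N₂` attached at leaf `x` of `N₁` is `Sum.inr (x, w)`. -/
def otimes {V₁ V₂ : Type*} (N₁ : Net V₁) (N₂ : Net V₂) : Net (V₁ ⊕ V₁ × V₂) where
  verts := Sum.inl '' (N₁.verts \ N₁.leaves) ∪ Sum.inr '' (N₁.leaves ×ˢ N₂.verts)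
  root := Sum.inl N₁.root
  arc a b :=
    match a, b with
    | Sum.inl u, Sum.inl w => N₁.arc u w ∧ w ∉ N₁.leaves
    | Sum.inl u, Sum.inr (x, w) => x ∈ N₁.leaves ∧ N₁.arc u x ∧ w = N₂.root
    | Sum.inr (x, w), Sum.inr (x', w') => x = x' ∧ x ∈ N₁.leaves ∧ N₂.arc w w'
    | _, _ => False

end Net

/-- A hierarchy: a collection of sets any two of which are disjoint or nested. -/
def IsHierarchy {V : Type*} (C : Set (Set V)) : Prop :=
  ∀ A ∈ C, ∀ B ∈ C, A ∩ B = ∅ ∨ A ⊆ B ∨ B ⊆ A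

/-!
A visible vertex `a` with identifying leaf `y` is comparable, under reachability, with every
vertex of a path from the root to `y`. Reachability between visible vertices of `N` is
reachability in `Cov(N)`, so along a `Cov(N)`-path whose vertices before the last are
subdividing, a visible non-subdividing vertex reachable from the start is reachable from the end.

Hence no visible non-subdividing vertex `w` lies strictly between the ends of an arc `u → v`
of `Ñ`: if the arc comes from `u → a → ⋯ → v` in `Cov(N)`, then `w` is comparable with `a`;
if `a` reaches `w`, so does `v`, and if `w` reaches `a`, then `w = a` because nothing visible
lies strictly inside the `Cov(N)`-arc `u → a`, and a non-subdividing `a` can only be `v`.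
A shortcut would put its middle vertex strictly between the ends of an arc. And on an `Ñ`-path
from the root to the identifying leaf of a vertex `v` of `Ñ`, the first vertex not reaching `v`
is reached from `v` by comparability, so it and its predecessor straddle `v`.
-/

namespace Net

section

variable {V : Type*} {M : Net V} {a u v w y : V} {l : List V}

lemma not_isPathFrom_nil : ¬ M.IsPathFrom u v [] := by
  simp [IsPathFrom]

lemma isPathFrom_singleton_iff : M.IsPathFrom u v [a] ↔ a = u ∧ a = v := by
  refine ⟨fun ⟨_, hu, hv⟩ => ⟨by simpa using hu, by simpa using hv⟩, ?_⟩
  rintro ⟨rfl, rfl⟩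
  exact ⟨List.isChain_singleton a, rfl, rfl⟩

lemma isPathFrom_cons_cons_iff {c : V} {t : List V} :
    M.IsPathFrom u v (a :: c :: t) ↔ a = u ∧ M.arc a c ∧ M.IsPathFrom c v (c :: t) := by
  constructor
  · rintro ⟨hchain, hu, hv⟩
    obtain ⟨hac, hchain⟩ := List.isChain_cons_cons.mp hchain
    exact ⟨by simpa using hu, hac, hchain, rfl, by simpa [List.getLast?_cons_cons] using hv⟩
  · rintro ⟨rfl, hac, hchain, -, hv⟩
    exact ⟨List.isChain_cons_cons.mpr ⟨hac, hchain⟩, rfl,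
      by simpa [List.getLast?_cons_cons] using hv⟩

lemma IsPathFrom.exists_cons (h : M.IsPathFrom u v l) : ∃ t, l = u :: t := by
  obtain ⟨-, h, -⟩ := h
  cases l with
  | nil => simp at h
  | cons a t => exact ⟨t, by simp_all⟩

@[elab_as_elim]
lemma IsPathFrom.induction_on {P : V → List V → Prop} (h : M.IsPathFrom u v l)
    (single : P v [v])
    (cons : ∀ a c t, M.arc a c → M.IsPathFrom c v (c :: t) → P c (c :: t) → P a (a :: c :: t)) :
    P u l := by
  induction l generalizing u with
  | nil => exact absurd h not_isPathFrom_nil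
  | cons a t ih =>
    cases t with
    | nil =>
      obtain ⟨rfl, rfl⟩ := isPathFrom_singleton_iff.mp h
      exact single
    | cons c t =>
      obtain ⟨rfl, hac, hc⟩ := isPathFrom_cons_cons_iff.mp h
      exact cons a c t hac hc (ih hc)

lemma IsPathFrom.reach (h : M.IsPathFrom u v l) : M.reach u v :=
  h.induction_on (P := fun u _ => M.reach u v) .refl fun _ _ _ hac _ ih => .head hac ih

lemma IsPathFrom.reach_of_mem (h : M.IsPathFrom u v l) (hw : w ∈ l) :
    M.reach u w ∧ M.reach w v := by
  revert hw
  refine h.induction_on (fun hw => ?_) fun a c t hac hc ih hw => ?_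
  · obtain rfl := List.mem_singleton.mp hw
    exact ⟨.refl, .refl⟩
  · rcases List.mem_cons.mp hw with rfl | hw
    · exact ⟨.refl, .head hac hc.reach⟩
    · exact (ih hw).imp_left (.head hac)

lemma IsPathFrom.append {l' : List V} (h : M.IsPathFrom u v l) (h' : M.IsPathFrom v w (v :: l')) :
    M.IsPathFrom u w (l ++ l') :=
  h.induction_on h' fun _ _ _ hac _ ih => isPathFrom_cons_cons_iff.mpr ⟨rfl, hac, ih⟩

lemma reach_iff_exists_isPathFrom : M.reach u v ↔ ∃ l, M.IsPathFrom u v l := by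
  refine ⟨fun h => ?_, fun ⟨l, hl⟩ => hl.reach⟩
  induction h using Relation.ReflTransGen.head_induction_on with
  | refl => exact ⟨[v], isPathFrom_singleton_iff.mpr ⟨rfl, rfl⟩⟩
  | head hac _ ih =>
    obtain ⟨l, hl⟩ := ih
    obtain ⟨t, rfl⟩ := hl.exists_cons
    exact ⟨_, isPathFrom_cons_cons_iff.mpr ⟨rfl, hac, hl⟩⟩

lemma reach_of_forall_mem (ha : ∀ l, M.IsPathFrom M.root y l → a ∈ l)
    (hy : M.reach M.root y) : M.reach a y := by
  obtain ⟨l, hl⟩ := reach_iff_exists_isPathFrom.mp hy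
  exact (hl.reach_of_mem (ha l hl)).2

lemma reach_or_reach_of_forall_mem (ha : ∀ l, M.IsPathFrom M.root y l → a ∈ l)
    (hw : M.reach M.root w) (hwy : M.reach w y) : M.reach a w ∨ M.reach w a := by
  obtain ⟨l, hl⟩ := reach_iff_exists_isPathFrom.mp hw
  obtain ⟨l', hl'⟩ := reach_iff_exists_isPathFrom.mp hwy
  obtain ⟨t, rfl⟩ := hl'.exists_cons
  rcases List.mem_append.mp (ha _ (hl.append hl')) with h | h
  · exact .inl (hl.reach_of_mem h).2
  · exact .inr (hl'.reach_of_mem (List.mem_cons_of_mem w h)).1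

lemma visible_of_mem_leaves (hy : y ∈ M.leaves) : M.Visible y :=
  ⟨hy.1, y, hy, fun _ hl => List.mem_of_getLast? hl.2.2⟩

lemma Subdividing.arc_right_unique {b c : V} (ha : M.Subdividing a) (hb : M.arc a b)
    (hc : M.arc a c) : b = c := by
  obtain ⟨x, hx⟩ := Set.ncard_eq_one.mp ha.2
  have hb : b ∈ {w | M.arc a w} := hb
  have hc : c ∈ {w | M.arc a w} := hc
  rw [hx, Set.mem_singleton_iff] at hb hc
  exact hb.trans hc.symm

lemma reach_of_cov_reach (h : Relation.ReflTransGen M.cov.arc u v) : M.reach u v :=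
  Relation.reflTransGen_closed (fun _ _ huv => huv.2.2.2.1) u v h

end

namespace IsPhylo

variable {V : Type*} {N : Net V} {X : Set V} {a u v w y : V} {l : List V}

lemma reach_antisymm (hN : N.IsPhylo X) (huv : N.reach u v) (hvu : N.reach v u) : u = v := by
  rcases huv.cases_head with rfl | ⟨c, huc, hcv⟩
  · rfl
  · exact absurd (hcv.trans hvu) (hN.acyclic huc)

lemma finite_setOf_reach (hN : N.IsPhylo X) (v : V) : {u | N.reach u v}.Finite := by
  refine (hN.finite.insert v).subset fun u hu => ?_
  rcases Relation.ReflTransGen.cases_head hu with rfl | ⟨c, huc, -⟩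
  · exact Set.mem_insert _ _
  · exact Set.mem_insert_of_mem _ (hN.arc_mem huc).1

lemma reach_root (hN : N.IsPhylo X) (hv : v ∈ N.verts) : N.reach N.root v := by
  induction hn : {u | N.reach u v}.ncard using Nat.strong_induction_on generalizing v with
  | _ n ih =>
  obtain rfl | hne := eq_or_ne v N.root
  · exact .refl
  obtain ⟨u, hu⟩ : ∃ u, N.arc u v := by
    by_contra! h
    exact hne (hN.root_unique v hv (by simp [inDeg, h]))
  have hlt : {t | N.reach t u}.ncard < n := hn ▸ Set.ncard_lt_ncard
    ⟨fun t ht => ht.tail hu, fun hsub => hN.acyclic hu (hsub .refl)⟩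
    (hN.finite_setOf_reach v)
  exact (ih _ hlt (hN.arc_mem hu).1 rfl).tail hu

lemma eq_of_reach_of_mem_leaves (hN : N.IsPhylo X) (hy : y ∈ N.leaves) (h : N.reach y v) :
    v = y := by
  rcases h.cases_head with rfl | ⟨c, hyc, -⟩
  · rfl
  have hfin : {w | N.arc y w}.Finite := hN.finite.subset fun w hw => (hN.arc_mem hw).2
  have hc : c ∈ {w | N.arc y w} := hyc
  simp [(Set.ncard_eq_zero hfin).mp hy.2] at hc

lemma not_cov_subdividing_of_mem_leaves (hN : N.IsPhylo X) (hy : y ∈ N.leaves) :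
    ¬ N.cov.Subdividing y := by
  rintro ⟨-, hs⟩
  obtain ⟨x, -, -, hne, hyx, -⟩ := Set.nonempty_of_ncard_ne_zero (hs.trans_ne one_ne_zero)
  exact hne (hN.eq_of_reach_of_mem_leaves hy hyx).symm

lemma cov_reach_of_reach (hN : N.IsPhylo X) (hu : N.Visible u) (hv : N.Visible v)
    (huv : N.reach u v) : Relation.ReflTransGen N.cov.arc u v := by
  induction hn : {t | N.Visible t ∧ N.reach u t ∧ N.reach t v}.ncard
    using Nat.strong_induction_on generalizing u v with
  | _ n ih =>
  by_cases hc : N.cov.arc u v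
  · exact .single hc
  obtain rfl | hne := eq_or_ne u v
  · exact .refl
  obtain ⟨w, hw, hwu, hwv, huw, hwv'⟩ :
      ∃ w, N.Visible w ∧ w ≠ u ∧ w ≠ v ∧ N.reach u w ∧ N.reach w v := by
    by_contra hno
    exact hc ⟨hu, hv, hne, huv, hno⟩
  have hfin : {t | N.Visible t ∧ N.reach u t ∧ N.reach t v}.Finite :=
    hN.finite.subset fun t ht => ht.1.1
  have hlt₁ : {t | N.Visible t ∧ N.reach u t ∧ N.reach t w}.ncard < n := hn ▸ Set.ncard_lt_ncard
    ⟨fun t ⟨h₁, h₂, h₃⟩ => ⟨h₁, h₂, h₃.trans hwv'⟩,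
      fun hsub => hwv (hN.reach_antisymm hwv' (hsub ⟨hv, huv, .refl⟩).2.2)⟩ hfin
  have hlt₂ : {t | N.Visible t ∧ N.reach w t ∧ N.reach t v}.ncard < n := hn ▸ Set.ncard_lt_ncard
    ⟨fun t ⟨h₁, h₂, h₃⟩ => ⟨h₁, huw.trans h₂, h₃⟩,
      fun hsub => hwu (hN.reach_antisymm huw (hsub ⟨hu, .refl, huv⟩).2.1).symm⟩ hfin
  exact (ih _ hlt₁ hu hw huw rfl).trans (ih _ hlt₂ hw hv hwv' rfl)

lemma reach_of_cov_arc_of_subdividing (hN : N.IsPhylo X) (ha : N.cov.Subdividing a)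
    (hau : N.cov.arc a u) (hw : N.Visible w) (hwa : w ≠ a) (haw : N.reach a w) : N.reach u w := by
  rcases (hN.cov_reach_of_reach hau.1 hw haw).cases_head with rfl | ⟨c, hac, hcw⟩
  · exact absurd rfl hwa
  · exact ha.arc_right_unique hac hau ▸ reach_of_cov_reach hcw

lemma reach_of_isPathFrom_cov (hN : N.IsPhylo X) (hl : N.cov.IsPathFrom u v l)
    (hsub : ∀ z ∈ l.dropLast, N.cov.Subdividing z) (hw : N.Visible w)
    (hws : ¬ N.cov.Subdividing w) (huw : N.reach u w) : N.reach v w := by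
  revert hsub huw
  refine hl.induction_on (fun _ h => h) fun a c t hac _ ih hsub haw => ?_
  have ha : N.cov.Subdividing a := hsub a List.mem_cons_self
  exact ih (fun z hz => hsub z (List.mem_cons_of_mem a hz))
    (hN.reach_of_cov_arc_of_subdividing ha hac hw (fun h => hws (h ▸ ha)) haw)

lemma reach_and_ne_of_normalise_arc (hN : N.IsPhylo X) (h : N.normalise.arc u v) :
    N.reach u v ∧ u ≠ v := by
  obtain ⟨-, -, l, hl, hlen, -⟩ := h
  obtain ⟨t, rfl⟩ := hl.exists_cons
  obtain _ | ⟨c, t⟩ := t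
  · simp at hlen
  obtain ⟨-, ⟨-, -, huc, hrc, -⟩, hc⟩ := isPathFrom_cons_cons_iff.mp hl
  have hcv : N.reach c v := reach_of_cov_reach hc.reach
  refine ⟨hrc.trans hcv, ?_⟩
  rintro rfl
  exact huc (hN.reach_antisymm hrc hcv)

lemma reach_of_normalise_reach (hN : N.IsPhylo X) (h : N.normalise.reach u v) : N.reach u v :=
  Relation.reflTransGen_closed (fun _ _ huv => (hN.reach_and_ne_of_normalise_arc huv).1) u v h

lemma eq_or_eq_of_normalise_arc (hN : N.IsPhylo X) (h : N.normalise.arc u v)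
    (hw : N.Visible w) (hws : ¬ N.cov.Subdividing w) (huw : N.reach u w) (hwv : N.reach w v) :
    w = u ∨ w = v := by
  by_contra! hne
  obtain ⟨-, -, l, hl, hlen, hsub⟩ := h
  obtain ⟨t, rfl⟩ := hl.exists_cons
  obtain _ | ⟨a, t⟩ := t
  · simp at hlen
  obtain ⟨-, hua, hav⟩ := isPathFrom_cons_cons_iff.mp hl
  obtain ⟨-, ⟨-, y, hy, hya⟩, -, -, hbetween⟩ := hua
  have hvy : N.reach v y := hN.reach_of_isPathFrom_cov hav hsub (visible_of_mem_leaves hy)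
    (hN.not_cov_subdividing_of_mem_leaves hy) (reach_of_forall_mem hya (hN.reach_root hy.1))
  rcases reach_or_reach_of_forall_mem hya (hN.reach_root hw.1) (hwv.trans hvy) with haw | hwa
  · exact hne.2 (hN.reach_antisymm hwv (hN.reach_of_isPathFrom_cov hav hsub hw hws haw))
  · obtain rfl : w = a := by
      by_contra hwa'
      exact hbetween ⟨w, hw, hne.1, hwa', huw, hwa⟩
    obtain _ | ⟨b, t⟩ := t
    · exact hne.2 (isPathFrom_singleton_iff.mp hav).2
    · exact hws (hsub w List.mem_cons_self)

lemma mem_leaves_normalise (hN : N.IsPhylo X) (hy : y ∈ N.leaves) : y ∈ N.normalise.leaves := by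
  refine ⟨⟨visible_of_mem_leaves hy, hN.not_cov_subdividing_of_mem_leaves hy⟩, ?_⟩
  have : {v | N.normalise.arc y v} = ∅ := Set.eq_empty_of_forall_notMem fun v hyv => by
    obtain ⟨hyv, hne⟩ := hN.reach_and_ne_of_normalise_arc hyv
    exact hne (hN.eq_of_reach_of_mem_leaves hy hyv).symm
  rw [outDeg, this, Set.ncard_empty]

lemma mem_of_isPathFrom_normalise (hN : N.IsPhylo X) (hv : N.Visible v)
    (hvs : ¬ N.cov.Subdividing v) (hy : y ∈ N.leaves)
    (hvy : ∀ l, N.IsPathFrom N.root y l → v ∈ l) (hl : N.normalise.IsPathFrom u y l)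
    (huv : N.reach u v) : v ∈ l := by
  revert huv
  refine hl.induction_on (fun hyv => ?_) fun a c t hac hc ih hav => ?_
  · exact List.mem_singleton.mpr (hN.eq_of_reach_of_mem_leaves hy hyv)
  by_cases hcv : N.reach c v
  · exact List.mem_cons_of_mem a (ih hcv)
  have hvc : N.reach v c := (reach_or_reach_of_forall_mem hvy (hN.reach_root hac.2.1.1.1)
    (hN.reach_of_normalise_reach hc.reach)).resolve_right hcv
  rcases hN.eq_or_eq_of_normalise_arc hac hv hvs hav hvc with rfl | rfl
  · exact List.mem_cons_self
  · exact List.mem_cons_of_mem _ List.mem_cons_self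

theorem normalise_treeChild (hN : N.IsPhylo X) : N.normalise.TreeChild := by
  rintro v ⟨hv, hvs⟩
  obtain ⟨-, y, hy, hvy⟩ := id hv
  exact ⟨⟨hv, hvs⟩, y, hN.mem_leaves_normalise hy,
    fun l hl => hN.mem_of_isPathFrom_normalise hv hvs hy hvy hl (hN.reach_root hv.1)⟩

theorem normalise_noShortcuts (hN : N.IsPhylo X) : N.normalise.NoShortcuts := by
  rintro u v huv ⟨l, hl, hlen⟩
  obtain ⟨t, rfl⟩ := hl.exists_cons
  obtain _ | ⟨w, _ | ⟨z, t⟩⟩ := t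
  · simp at hlen
  · simp at hlen
  obtain ⟨-, huw, hwv⟩ := isPathFrom_cons_cons_iff.mp hl
  obtain ⟨-, hwz, hzv⟩ := isPathFrom_cons_cons_iff.mp hwv
  obtain ⟨hruw, hneuw⟩ := hN.reach_and_ne_of_normalise_arc huw
  obtain ⟨hrwz, hnewz⟩ := hN.reach_and_ne_of_normalise_arc hwz
  have hrzv : N.reach z v := hN.reach_of_normalise_reach hzv.reach
  rcases hN.eq_or_eq_of_normalise_arc huv hwz.1.1 hwz.1.2 hruw (hrwz.trans hrzv) with rfl | rfl
  · exact hneuw rfl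
  · exact hnewz (hN.reach_antisymm hrwz hrzv)

end IsPhylo

end Net

theorem stmt6 {V : Type*} (N : Net V) (X : Set V) (hN : N.IsPhylo X) :
    N.normalise.TreeChild ∧ N.normalise.NoShortcuts :=
  ⟨hN.normalise_treeChild, hN.normalise_noShortcuts⟩
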